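/- arXiv:2412.02710 — 2 statements merged into one kernel-verified Lean document; each statement's English description precedes it below -/
import Mathlib

section
/- Consider the RIBC system with n ≥ 3 agents, confidence bounds r_1 ≥ r_2 ≥ ⋯ ≥ r_n > 0, and random edge sets that are independent across times (and independent of the initial state) and satisfy P(E_t = 𝓔) ≥ δ for every 𝓔 ⊆ A and every t, for some δ ∈ (0,1). Assume the initial state x(0) is random with values in the product of n closed unit balls of ℝ^d and that its joint distribution has a density lower bound ρ_min > 0, i.e., for any closed balls S_{z_i,a_i} ⊆ S_{0,1} (i = 1,…,n), P(x_i(0) ∈ S_{z_i,a_i} for all i) ≥ ρ_min · Π_{i=1}^n V_d(a_i), where V_d(a) is the volume of a ball of radius a in ℝ^d. Then the system reaches consensus in finite time almost surely if and only if r_1 ≥ 2. -/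
open Finset MeasureTheory ProbabilityTheory Metric

noncomputable section

open scoped Classical

/-- The neighbor set of agent `i`. -/
def nbr {n d : ℕ} (r : Fin n → ℝ) (E : Finset (Fin n × Fin n))
    (x : Fin n → EuclideanSpace ℝ (Fin d)) (i : Fin n) : Finset (Fin n) :=
  Finset.univ.filter (fun j => j ≠ i ∧ (i, j) ∈ E ∧ ‖x i - x j‖ ≤ r i)

/-- One step of the bounded-confidence dynamics. -/
def step {n d : ℕ} (r : Fin n → ℝ) (E : Finset (Fin n × Fin n))
    (x : Fin n → EuclideanSpace ℝ (Fin d)) : Fin n → EuclideanSpace ℝ (Fin d) :=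
  fun i => ((1 : ℝ) + (nbr r E x i).card)⁻¹ • (x i + ∑ j ∈ nbr r E x i, x j)

/-- The trajectory of the bounded-confidence dynamics driven by edge sets `E`. -/
def traj {n d : ℕ} (r : Fin n → ℝ) (E : ℕ → Finset (Fin n × Fin n))
    (x0 : Fin n → EuclideanSpace ℝ (Fin d)) : ℕ → Fin n → EuclideanSpace ℝ (Fin d)
  | 0 => x0
  | t + 1 => step r (E t) (traj r E x0 t)

instance (α : Type*) : MeasurableSpace (Finset α) := ⊤

namespace RIBC

variable {n d : ℕ} {r : Fin n → ℝ}

lemma mem_nbr {E : Finset (Fin n × Fin n)} {x : Fin n → EuclideanSpace ℝ (Fin d)}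
    {i j : Fin n} : j ∈ nbr r E x i ↔ j ≠ i ∧ (i, j) ∈ E ∧ ‖x i - x j‖ ≤ r i := by
  simp [nbr]

/-- step stays in a closed ball if all relevant points are in it -/
lemma step_mem_closedBall_of {E : Finset (Fin n × Fin n)}
    {x : Fin n → EuclideanSpace ℝ (Fin d)} {i : Fin n}
    {z : EuclideanSpace ℝ (Fin d)} {C : ℝ}
    (hi : x i ∈ closedBall z C) (hnb : ∀ j ∈ nbr r E x i, x j ∈ closedBall z C) :
    step r E x i ∈ closedBall z C := by
  set N := nbr r E x i with hN
  have hC : 0 ≤ C := by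
    have := mem_closedBall.1 hi; exact le_trans dist_nonneg this
  have hcard : (0:ℝ) < 1 + N.card := by positivity
  rw [mem_closedBall_iff_norm]
  have key : step r E x i - z = ((1:ℝ) + N.card)⁻¹ • ((x i - z) + ∑ j ∈ N, (x j - z)) := by
    have h2 : (x i - z) + ∑ j ∈ N, (x j - z)
        = (x i + ∑ j ∈ N, x j) - ((1:ℝ) + N.card) • z := by
      rw [Finset.sum_sub_distrib, Finset.sum_const, add_smul, one_smul]
      rw [Nat.cast_smul_eq_nsmul]
      abel
    rw [h2, smul_sub, smul_smul, inv_mul_cancel₀ hcard.ne', one_smul]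
    rfl
  rw [key, norm_smul]
  have hbound : ‖(x i - z) + ∑ j ∈ N, (x j - z)‖ ≤ (1 + N.card) * C := by
    calc ‖(x i - z) + ∑ j ∈ N, (x j - z)‖ ≤ ‖x i - z‖ + ‖∑ j ∈ N, (x j - z)‖ := norm_add_le _ _
    _ ≤ ‖x i - z‖ + ∑ j ∈ N, ‖x j - z‖ := by
        gcongr; exact norm_sum_le _ _
    _ ≤ C + ∑ j ∈ N, C := by
        gcongr with j hj
        · exact mem_closedBall_iff_norm.1 hi
        · exact mem_closedBall_iff_norm.1 (hnb j hj)
    _ = (1 + N.card) * C := by rw [Finset.sum_const, nsmul_eq_mul]; ring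
  calc ‖((1:ℝ) + N.card)⁻¹‖ * ‖(x i - z) + ∑ j ∈ N, (x j - z)‖
      ≤ ((1:ℝ) + N.card)⁻¹ * ((1 + N.card) * C) := by
        rw [Real.norm_eq_abs, abs_of_pos (by positivity)]
        gcongr
  _ = C := by field_simp

lemma step_eq_self_of_nbr_empty {E : Finset (Fin n × Fin n)}
    {x : Fin n → EuclideanSpace ℝ (Fin d)} {i : Fin n}
    (h : nbr r E x i = ∅) : step r E x i = x i := by
  simp [step, h]

lemma nbr_empty_of_not_fst {E : Finset (Fin n × Fin n)}
    {x : Fin n → EuclideanSpace ℝ (Fin d)} {i : Fin n}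
    (h : ∀ j, (i, j) ∉ E) : nbr r E x i = ∅ := by
  ext j; simp [mem_nbr, h j]

/-- step when all opinions coincide -/
lemma step_of_consensus {E : Finset (Fin n × Fin n)}
    {x : Fin n → EuclideanSpace ℝ (Fin d)}
    (h : ∀ i j, x i = x j) (i : Fin n) : step r E x i = x i := by
  have : ∀ j ∈ nbr r E x i, x j = x i := fun j _ => h j i
  have hcard : (0:ℝ) < 1 + (nbr r E x i).card := by positivity
  rw [step, Finset.sum_congr rfl this, Finset.sum_const,
    ← Nat.cast_smul_eq_nsmul ℝ]
  match_scalars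
  field_simp

variable {x : Fin n → EuclideanSpace ℝ (Fin d)}

lemma step_pair {a b : Fin n} (hba : b ≠ a) (hcond : ‖x a - x b‖ ≤ r a) :
    step r {(a,b)} x = Function.update x a ((2:ℝ)⁻¹ • (x a + x b)) := by
  funext i
  rcases eq_or_ne i a with h | hia
  · subst h
    have hN : nbr r {(i,b)} x i = {b} := by
      ext j
      simp only [mem_nbr, Finset.mem_singleton, Prod.mk.injEq]
      constructor
      · rintro ⟨-, h2, -⟩
        simpa using h2
      · rintro rfl
        refine ⟨hba, by simp, hcond⟩
    rw [Function.update_self, step, hN]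
    norm_num
  · have hN : nbr r {(a,b)} x i = ∅ := by
      apply nbr_empty_of_not_fst
      intro j hj
      simp only [Finset.mem_singleton, Prod.mk.injEq] at hj
      exact hia hj.1
    rw [Function.update_of_ne hia, step_eq_self_of_nbr_empty hN]

/-- executing a list of edge sets -/
def exec (r : Fin n → ℝ) (l : List (Finset (Fin n × Fin n)))
    (x : Fin n → EuclideanSpace ℝ (Fin d)) : Fin n → EuclideanSpace ℝ (Fin d) :=
  l.foldl (fun y e => step r e y) x

@[simp] lemma exec_nil : exec r ([] : List (Finset (Fin n × Fin n))) x = x := rfl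

@[simp] lemma exec_cons {e : Finset (Fin n × Fin n)} {l : List (Finset (Fin n × Fin n))} :
    exec r (e :: l) x = exec r l (step r e x) := rfl

lemma exec_append {l₁ l₂ : List (Finset (Fin n × Fin n))} :
    exec r (l₁ ++ l₂) x = exec r l₂ (exec r l₁ x) := List.foldl_append

lemma exec_ball {z : EuclideanSpace ℝ (Fin d)} {C : ℝ}
    {l : List (Finset (Fin n × Fin n))} (hx : ∀ i, x i ∈ closedBall z C) :
    ∀ i, exec r l x i ∈ closedBall z C := by
  induction l generalizing x with
  | nil => exact hx
  | cons e l ih =>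
    rw [exec_cons]
    exact ih (fun i => step_mem_closedBall_of (hx i) (fun j _ => hx j))

lemma traj_shift_one {E : ℕ → Finset (Fin n × Fin n)} (t : ℕ) :
    traj r E x (t+1) = traj r (fun s => E (s+1)) (step r (E 0) x) t := by
  induction t with
  | zero => rfl
  | succ t ih => rw [traj, ih]; rfl

lemma traj_eq_exec {l : List (Finset (Fin n × Fin n))} {E : ℕ → Finset (Fin n × Fin n)}
    (hE : ∀ t (ht : t < l.length), E t = l.get ⟨t, ht⟩) :
    traj r E x l.length = exec r l x := by
  induction l generalizing E x with
  | nil => rfl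
  | cons e l ih =>
    have h0 : E 0 = e := hE 0 (by simp)
    rw [List.length_cons, traj_shift_one, h0, exec_cons]
    exact ih (fun t ht => hE (t+1) (by simpa using Nat.succ_lt_succ ht))

lemma traj_add {E : ℕ → Finset (Fin n × Fin n)} (a t : ℕ) :
    traj r E x (a + t) = traj r (fun s => E (a + s)) (traj r E x a) t := by
  induction t with
  | zero => rfl
  | succ t ih => rw [← Nat.add_assoc, traj, ih]; rfl

lemma traj_consensus_persist {E : ℕ → Finset (Fin n × Fin n)} {τ : ℕ}
    (h : ∀ i j, traj r E x τ i = traj r E x τ j) :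
    ∀ t, τ ≤ t → ∀ i j, traj r E x t i = traj r E x t j := by
  intro t ht
  obtain ⟨u, rfl⟩ := Nat.exists_eq_add_of_le ht
  induction u with
  | zero => exact h
  | succ u ih =>
    intro i j
    have hc := ih (Nat.le_add_right _ _)
    rw [← Nat.add_assoc, traj, step_of_consensus hc, step_of_consensus hc]
    exact hc i j

lemma traj_ball {E : ℕ → Finset (Fin n × Fin n)} {z : EuclideanSpace ℝ (Fin d)} {C : ℝ}
    (hx : ∀ i, x i ∈ closedBall z C) : ∀ t i, traj r E x t i ∈ closedBall z C := by
  intro t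
  induction t with
  | zero => exact hx
  | succ t ih =>
    intro i
    exact step_mem_closedBall_of (ih i) (fun j _ => ih j)

lemma norm_sub_le_two (hx : ∀ i, ‖x i‖ ≤ 1) (i j : Fin n) : ‖x i - x j‖ ≤ 2 := by
  calc ‖x i - x j‖ ≤ ‖x i‖ + ‖x j‖ := norm_sub_le _ _
  _ ≤ 2 := by linarith [hx i, hx j]

lemma ball_iff_norm {y : Fin n → EuclideanSpace ℝ (Fin d)} :
    (∀ i, y i ∈ closedBall (0 : EuclideanSpace ℝ (Fin d)) 1) ↔ ∀ i, ‖y i‖ ≤ 1 := by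
  simp [mem_closedBall_zero_iff]

lemma exec_replicate {a b : Fin n} (hba : b ≠ a) (h2 : 2 ≤ r a)
    (hx : ∀ i, ‖x i‖ ≤ 1) (k : ℕ) :
    exec r (List.replicate k {(a,b)}) x
      = Function.update x a (x b + ((2:ℝ)⁻¹)^k • (x a - x b)) := by
  induction k generalizing x with
  | zero =>
    simp only [List.replicate, exec_nil, pow_zero, one_smul, add_sub_cancel]
    exact (Function.update_eq_self a x).symm
  | succ k ih =>
    rw [List.replicate_succ, exec_cons]
    have hcond : ‖x a - x b‖ ≤ r a := le_trans (norm_sub_le_two hx a b) h2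
    rw [step_pair hba hcond]
    set y := Function.update x a ((2:ℝ)⁻¹ • (x a + x b)) with hy
    have hyball : ∀ i, ‖y i‖ ≤ 1 := by
      intro i
      rcases eq_or_ne i a with rfl | hia
      · rw [hy, Function.update_self, norm_smul]
        have : ‖x i + x b‖ ≤ 2 := by
          calc ‖x i + x b‖ ≤ ‖x i‖ + ‖x b‖ := norm_add_le _ _
          _ ≤ 2 := by linarith [hx i, hx b]
        rw [Real.norm_eq_abs]
        calc |(2:ℝ)⁻¹| * ‖x i + x b‖ ≤ 2⁻¹ * 2 := by
              rw [abs_of_pos (by norm_num)]; gcongr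
        _ = 1 := by norm_num
      · rw [hy, Function.update_of_ne hia]; exact hx i
    rw [ih hyball]
    have hyb : y b = x b := Function.update_of_ne hba _ _
    have hya : y a = (2:ℝ)⁻¹ • (x a + x b) := Function.update_self _ _ _
    have hval : y b + ((2:ℝ)⁻¹)^k • (y a - y b)
        = x b + ((2:ℝ)⁻¹)^(k+1) • (x a - x b) := by
      rw [hyb, hya, pow_succ]
      module
    rw [hval, hy, Function.update_idem]

/-- a drag round: reposition `a` near `m`, then near `j`, then pull `j`. -/
def roundL (a m j : Fin n) (H : ℕ) : List (Finset (Fin n × Fin n)) :=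
  List.replicate H {(a,m)} ++ (List.replicate H {(a,j)} ++ [{(j,a)}])

lemma roundL_est {a m j : Fin n} (hma : m ≠ a) (hja : j ≠ a) (hjm : j ≠ m)
    (h2 : 2 ≤ r a) {H : ℕ} (hH : (2:ℝ) * ((2:ℝ)⁻¹)^H ≤ r j)
    (hx : ∀ i, ‖x i‖ ≤ 1) :
    (∀ k, k ≠ a → k ≠ j → exec r (roundL a m j H) x k = x k) ∧
    ‖exec r (roundL a m j H) x j - x m‖
      ≤ (1 - ((2:ℝ)⁻¹)^H/2) * ‖x j - x m‖ + (((2:ℝ)⁻¹)^H/2) * (2 * ((2:ℝ)⁻¹)^H) := by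
  set c : ℝ := ((2:ℝ)⁻¹)^H with hc
  have hc0 : 0 < c := by positivity
  have hc1 : c ≤ 1 := by
    rw [hc]
    exact pow_le_one₀ (by norm_num) (by norm_num)
  rw [roundL, exec_append, exec_append]
  rw [exec_replicate hma h2 hx H]
  set x1 := Function.update x a (x m + c • (x a - x m)) with hx1
  have hx1ball : ∀ i, ‖x1 i‖ ≤ 1 := by
    have h := exec_ball (r := r) (l := List.replicate H {(a,m)}) (z := (0:EuclideanSpace ℝ (Fin d)))
      (C := 1) (x := x) (fun i => mem_closedBall_zero_iff.2 (hx i))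
    rw [exec_replicate hma h2 hx H] at h
    intro i
    exact mem_closedBall_zero_iff.1 (h i)
  rw [exec_replicate hja h2 hx1ball H]
  have hx1j : x1 j = x j := Function.update_of_ne hja _ _
  have hx1a : x1 a = x m + c • (x a - x m) := Function.update_self _ _ _
  set x2 := Function.update x1 a (x1 j + c • (x1 a - x1 j)) with hx2
  have hx2j : x2 j = x j := by rw [hx2, Function.update_of_ne hja, hx1j]
  have hx2a : x2 a = x j + c • (x1 a - x j) := by
    rw [hx2, Function.update_self, hx1j]
  have hcond : ‖x2 j - x2 a‖ ≤ r j := by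
    have hre : x2 j - x2 a = -(c • (x1 a - x j)) := by rw [hx2j, hx2a]; module
    rw [hre, norm_neg, norm_smul, Real.norm_eq_abs, abs_of_pos hc0]
    have h1 : ‖x1 a - x j‖ ≤ 2 := by
      calc ‖x1 a - x j‖ ≤ ‖x1 a‖ + ‖x j‖ := norm_sub_le _ _
      _ ≤ 2 := by linarith [hx1ball a, hx j]
    calc c * ‖x1 a - x j‖ ≤ c * 2 := by gcongr
    _ ≤ r j := by linarith
  have hstep : exec r ((singleton (j,a) : Finset (Fin n × Fin n)) :: []) x2 = Function.update x2 j ((2:ℝ)⁻¹ • (x2 j + x2 a)) := by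
    rw [exec_cons, exec_nil, step_pair hja.symm hcond]
  rw [hstep]
  constructor
  · intro k hka hkj
    rw [Function.update_of_ne hkj, hx2, Function.update_of_ne hka, hx1,
      Function.update_of_ne hka]
  · rw [Function.update_self]
    have hyj : (2:ℝ)⁻¹ • (x2 j + x2 a) - x m
        = (1 - c/2) • (x j - x m) + (c/2) • (x1 a - x m) := by
      rw [hx2j, hx2a]
      module
    have hxam : ‖x1 a - x m‖ ≤ 2 * c := by
      have : x1 a - x m = c • (x a - x m) := by rw [hx1a]; module
      rw [this, norm_smul, Real.norm_eq_abs, abs_of_pos hc0]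
      calc c * ‖x a - x m‖ ≤ c * 2 := by gcongr; exact norm_sub_le_two hx a m
      _ = 2 * c := by ring
    rw [hyj]
    calc ‖(1 - c/2) • (x j - x m) + (c/2) • (x1 a - x m)‖
        ≤ ‖(1 - c/2) • (x j - x m)‖ + ‖(c/2) • (x1 a - x m)‖ := norm_add_le _ _
    _ = |1 - c/2| * ‖x j - x m‖ + |c/2| * ‖x1 a - x m‖ := by
        rw [norm_smul, norm_smul, Real.norm_eq_abs, Real.norm_eq_abs]
    _ ≤ (1 - c/2) * ‖x j - x m‖ + (c/2) * (2 * c) := by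
        rw [abs_of_nonneg (by linarith), abs_of_pos (by linarith)]
        gcongr
    _ = (1 - c/2) * ‖x j - x m‖ + (c/2) * (2 * c) := rfl

def dragL (a m j : Fin n) (H R : ℕ) : List (Finset (Fin n × Fin n)) :=
  (List.replicate R (roundL a m j H)).flatten

lemma dragL_est {a m j : Fin n} (hma : m ≠ a) (hja : j ≠ a) (hjm : j ≠ m)
    (h2 : 2 ≤ r a) {H : ℕ} (hH : (2:ℝ) * ((2:ℝ)⁻¹)^H ≤ r j)
    (hx : ∀ i, ‖x i‖ ≤ 1) (R : ℕ) :
    (∀ k, k ≠ a → k ≠ j → exec r (dragL a m j H R) x k = x k) ∧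
    ‖exec r (dragL a m j H R) x j - x m‖
      ≤ (1 - ((2:ℝ)⁻¹)^H/2)^R * ‖x j - x m‖
        + (1 - (1 - ((2:ℝ)⁻¹)^H/2)^R) * (2 * ((2:ℝ)⁻¹)^H) := by
  set c : ℝ := ((2:ℝ)⁻¹)^H with hc
  have hc0 : 0 < c := by positivity
  have hc1 : c ≤ 1 := pow_le_one₀ (by norm_num) (by norm_num)
  have hs0 : 0 ≤ 1 - c/2 := by linarith
  have hs1 : 1 - c/2 ≤ 1 := by linarith
  induction R generalizing x with
  | zero =>
    refine ⟨fun k _ _ => rfl, ?_⟩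
    simp [dragL, List.replicate]
  | succ R ih =>
    rw [dragL, List.replicate_succ, List.flatten_cons, exec_append]
    set x' := exec r (roundL a m j H) x with hx'
    have hround := roundL_est hma hja hjm h2 hH hx
    have hx'ball : ∀ i, ‖x' i‖ ≤ 1 := by
      intro i
      exact mem_closedBall_zero_iff.1
        (exec_ball (fun i => mem_closedBall_zero_iff.2 (hx i)) i)
    obtain ⟨ihk, ihj⟩ := ih hx'ball
    constructor
    · intro k hka hkj
      rw [show (List.replicate R (roundL a m j H)).flatten = dragL a m j H R from rfl]
      rw [ihk k hka hkj]
      exact hround.1 k hka hkj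
    · have hx'm : x' m = x m := hround.1 m hma (Ne.symm hjm)
      rw [show (List.replicate R (roundL a m j H)).flatten = dragL a m j H R from rfl]
      calc ‖exec r (dragL a m j H R) x' j - x m‖
          = ‖exec r (dragL a m j H R) x' j - x' m‖ := by rw [hx'm]
      _ ≤ (1 - c/2)^R * ‖x' j - x' m‖ + (1 - (1 - c/2)^R) * (2*c) := ihj
      _ ≤ (1 - c/2)^R * ((1 - c/2) * ‖x j - x m‖ + (c/2) * (2*c))
            + (1 - (1 - c/2)^R) * (2*c) := by
          gcongr
          rw [hx'm]
          exact hround.2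
      _ = (1 - c/2)^(R+1) * ‖x j - x m‖ + (1 - (1 - c/2)^(R+1)) * (2*c) := by
          rw [pow_succ]
          ring

def manyL (a m : Fin n) (H R : ℕ) (l : List (Fin n)) : List (Finset (Fin n × Fin n)) :=
  (l.map (fun j => dragL a m j H R)).flatten

lemma manyL_est {a m : Fin n} (hma : m ≠ a)
    (h2 : 2 ≤ r a) {H : ℕ} (hH : ∀ j, (2:ℝ) * ((2:ℝ)⁻¹)^H ≤ r j)
    {l : List (Fin n)} (hl : ∀ j ∈ l, j ≠ a ∧ j ≠ m)
    (hx : ∀ i, ‖x i‖ ≤ 1) (R : ℕ) :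
    (∀ k, k ≠ a → k ∉ l → exec r (manyL a m H R l) x k = x k) ∧
    (∀ j ∈ l, ‖exec r (manyL a m H R l) x j - x m‖
      ≤ (1 - ((2:ℝ)⁻¹)^H/2)^R * 2 + 2 * ((2:ℝ)⁻¹)^H) := by
  set c : ℝ := ((2:ℝ)⁻¹)^H with hc
  have hc0 : 0 < c := by positivity
  have hc1 : c ≤ 1 := pow_le_one₀ (by norm_num) (by norm_num)
  have hs0 : 0 ≤ 1 - c/2 := by linarith
  have hsR : ∀ R : ℕ, (0:ℝ) ≤ (1 - c/2)^R := fun R => pow_nonneg hs0 R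
  have hsR1 : ∀ R : ℕ, (1 - c/2)^R ≤ 1 := fun R => pow_le_one₀ hs0 (by linarith)
  induction l generalizing x with
  | nil =>
    exact ⟨fun k _ _ => rfl, fun j hj => absurd hj List.not_mem_nil⟩
  | cons j l ih =>
    obtain ⟨hja, hjm⟩ := hl j (List.mem_cons_self)
    rw [manyL, List.map_cons, List.flatten_cons, exec_append]
    set x' := exec r (dragL a m j H R) x with hx'
    have hdrag := dragL_est hma hja hjm h2 (hH j) hx R
    have hx'ball : ∀ i, ‖x' i‖ ≤ 1 := by
      intro i
      exact mem_closedBall_zero_iff.1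
        (exec_ball (fun i => mem_closedBall_zero_iff.2 (hx i)) i)
    have hx'm : x' m = x m := hdrag.1 m hma hjm.symm
    obtain ⟨ihk, ihj⟩ := ih (fun j' hj' => hl j' (List.mem_cons_of_mem _ hj')) hx'ball
    rw [show ((l.map (fun j => dragL a m j H R)).flatten : List (Finset (Fin n × Fin n)))
      = manyL a m H R l from rfl]
    constructor
    · intro k hka hkl
      rw [ihk k hka (fun h => hkl (List.mem_cons_of_mem _ h))]
      exact hdrag.1 k hka (fun h => hkl (h ▸ List.mem_cons_self))
    · intro j' hj'
      have hbound : ‖x' j - x m‖ ≤ (1 - c/2)^R * 2 + 2*c := by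
        calc ‖x' j - x m‖ ≤ (1 - c/2)^R * ‖x j - x m‖ + (1 - (1 - c/2)^R) * (2*c) :=
              hdrag.2
        _ ≤ (1 - c/2)^R * 2 + 1 * (2*c) := by
            gcongr
            · exact norm_sub_le_two hx j m
            · linarith [hsR R]
        _ = (1 - c/2)^R * 2 + 2*c := by ring
      rcases List.mem_cons.1 hj' with rfl | hj'mem
      · by_cases hjl : j' ∈ l
        · have := ihj j' hjl
          rwa [hx'm] at this
        · obtain ⟨hj'a, _⟩ := hl j' (List.mem_cons_self)
          rw [ihk j' hj'a hjl]
          exact hbound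
      · have := ihj j' hj'mem
        rwa [hx'm] at this

lemma step_offDiag (h : ∀ i j : Fin n, ‖x i - x j‖ ≤ r i) (i i' : Fin n) :
    step r Finset.univ.offDiag x i = step r Finset.univ.offDiag x i' := by
  have hN : ∀ k : Fin n, nbr r Finset.univ.offDiag x k = Finset.univ.erase k := by
    intro k
    ext j
    simp only [mem_nbr, Finset.mem_offDiag, Finset.mem_erase, Finset.mem_univ, and_true,
      true_and]
    constructor
    · rintro ⟨hjk, -, -⟩; exact hjk
    · intro hjk; exact ⟨hjk, Ne.symm hjk, h k j⟩
  have hcard : ∀ k : Fin n, (Finset.univ.erase k).card = n - 1 := by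
    intro k
    rw [Finset.card_erase_of_mem (Finset.mem_univ _), Finset.card_univ, Fintype.card_fin]
  have hsum : ∀ k : Fin n, x k + ∑ j ∈ Finset.univ.erase k, x j = ∑ j, x j := by
    intro k
    exact Finset.add_sum_erase _ _ (Finset.mem_univ k)
  rw [step, step, hN, hN, hcard, hcard, hsum, hsum]

theorem consensus_list {n : ℕ} {r : Fin n → ℝ} (hn : 3 ≤ n) (hrpos : ∀ i, 0 < r i)
    (hrmono : ∀ i j : Fin n, i ≤ j → r j ≤ r i) (h2 : 2 ≤ r ⟨0, Nat.lt_of_lt_of_le (by norm_num) hn⟩) :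
    ∃ L : List (Finset (Fin n × Fin n)), L ≠ [] ∧ (∀ e ∈ L, e ⊆ Finset.univ.offDiag) ∧
      ∀ x : Fin n → EuclideanSpace ℝ (Fin d), (∀ i, ‖x i‖ ≤ 1) →
        ∀ i j, exec r L x i = exec r L x j := by
  set a : Fin n := ⟨0, by omega⟩ with ha
  set m : Fin n := ⟨n-1, by omega⟩ with hm
  have hma : m ≠ a := by
    simp only [hm, ha, Fin.ne_iff_vne]
    omega
  set ρ : ℝ := r m with hρdef
  have hρ : 0 < ρ := hrpos m
  have hρ_min : ∀ j, ρ ≤ r j := by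
    intro j
    apply hrmono j m
    simp only [Fin.le_def, hm]
    omega
  obtain ⟨H, hH⟩ : ∃ H : ℕ, ((2:ℝ)⁻¹)^H < ρ/16 :=
    exists_pow_lt_of_lt_one (by positivity) (by norm_num)
  set c : ℝ := ((2:ℝ)⁻¹)^H with hcdef
  have hc0 : 0 < c := by positivity
  have hc1 : c ≤ 1 := pow_le_one₀ (by norm_num) (by norm_num)
  have h2c : ∀ j, (2:ℝ) * c ≤ r j := by
    intro j
    calc (2:ℝ) * c ≤ 2 * (ρ/16) := by linarith
    _ ≤ ρ := by linarith
    _ ≤ r j := hρ_min j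
  have hs0 : 0 ≤ 1 - c/2 := by linarith
  have hs1 : 1 - c/2 < 1 := by linarith
  obtain ⟨R, hR⟩ : ∃ R : ℕ, (1 - c/2)^R < ρ/16 :=
    exists_pow_lt_of_lt_one (by positivity) hs1
  set l : List (Fin n) := (List.finRange n).filter (fun j => decide (j ≠ a ∧ j ≠ m)) with hldef
  have hl : ∀ j ∈ l, j ≠ a ∧ j ≠ m := by
    intro j hj
    have := (List.mem_filter.1 hj).2
    exact of_decide_eq_true this
  have hlcompl : ∀ k : Fin n, k ≠ a → k ≠ m → k ∈ l := by
    intro k hka hkm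
    exact List.mem_filter.2 ⟨List.mem_finRange k, decide_eq_true ⟨hka, hkm⟩⟩
  refine ⟨manyL a m H R l ++ (List.replicate H {(a,m)} ++ [Finset.univ.offDiag]), ?_, ?_, ?_⟩
  · simp
  · -- subsets of offDiag
    have hsingle : ∀ u v : Fin n, u ≠ v → ({(u,v)} : Finset (Fin n × Fin n)) ⊆
        Finset.univ.offDiag := by
      intro u v huv p hp
      simp only [Finset.mem_singleton] at hp
      subst hp
      exact Finset.mem_offDiag.2 ⟨Finset.mem_univ _, Finset.mem_univ _, huv⟩
    intro e he
    rcases List.mem_append.1 he with he | he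
    · rw [manyL] at he
      obtain ⟨lj, hlj, helj⟩ := List.mem_flatten.1 he
      obtain ⟨j, hjl, rfl⟩ := List.mem_map.1 hlj
      obtain ⟨hja, hjm⟩ := hl j hjl
      rw [dragL] at helj
      obtain ⟨lr, hlr, helr⟩ := List.mem_flatten.1 helj
      rw [List.mem_replicate] at hlr
      rw [hlr.2, roundL] at helr
      rcases List.mem_append.1 helr with h' | h'
      · rw [List.eq_of_mem_replicate h']
        exact hsingle a m (Ne.symm hma)
      rcases List.mem_append.1 h' with h' | h'
      · rw [List.eq_of_mem_replicate h']
        exact hsingle a j (Ne.symm hja)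
      · rw [List.mem_singleton.1 h']
        exact hsingle j a hja
    rcases List.mem_append.1 he with he | he
    · rw [List.eq_of_mem_replicate he]
      exact hsingle a m (Ne.symm hma)
    · rw [List.mem_singleton.1 he]
  · -- consensus
    intro x hx i i'
    rw [exec_append, exec_append]
    set y := exec r (manyL a m H R l) x with hy
    have hest := manyL_est hma h2 h2c hl hx R
    have hyball : ∀ i, ‖y i‖ ≤ 1 := by
      intro i
      exact mem_closedBall_zero_iff.1
        (exec_ball (fun i => mem_closedBall_zero_iff.2 (hx i)) i)
    have hym : y m = x m := hest.1 m hma (fun h => (hl m h).2 rfl)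
    rw [exec_replicate hma h2 hyball H]
    set z := Function.update y a (y m + c • (y a - y m)) with hz
    have hzm : z m = y m := Function.update_of_ne hma _ _
    have hclose : ∀ k, ‖z k - y m‖ ≤ ρ/4 := by
      intro k
      rcases eq_or_ne k a with rfl | hka
      · rw [hz, Function.update_self]
        have heq : y m + c • (y a - y m) - y m = c • (y a - y m) := by module
        rw [heq, norm_smul, Real.norm_eq_abs, abs_of_pos hc0]
        have h1 : ‖y a - y m‖ ≤ 2 := norm_sub_le_two hyball a m
        calc c * ‖y a - y m‖ ≤ c * 2 := by gcongr
        _ ≤ ρ/4 := by linarith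
      · rw [hz, Function.update_of_ne hka]
        rcases eq_or_ne k m with rfl | hkm
        · simp only [sub_self, norm_zero]
          positivity
        · have hkl : k ∈ l := hlcompl k hka hkm
          have := hest.2 k hkl
          rw [hym]
          calc ‖y k - x m‖ ≤ (1 - c/2)^R * 2 + 2 * c := this
          _ ≤ ρ/16 * 2 + 2 * (ρ/16) := by
              have := hR.le
              have h2' := hH.le
              gcongr <;> linarith
          _ ≤ ρ/4 := by linarith
    have hpair : ∀ i j : Fin n, ‖z i - z j‖ ≤ r i := by
      intro i j
      calc ‖z i - z j‖ = ‖(z i - y m) - (z j - y m)‖ := by rw [sub_sub_sub_cancel_right]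
      _ ≤ ‖z i - y m‖ + ‖z j - y m‖ := norm_sub_le _ _
      _ ≤ ρ/4 + ρ/4 := by gcongr <;> [exact hclose i; exact hclose j]
      _ ≤ ρ := by linarith
      _ ≤ r i := hρ_min i
    rw [exec_cons, exec_nil]
    exact step_offDiag hpair i i'

/-- The easy direction: if the max radius is `< 2`, there is a positive-probability event
on which consensus never occurs. -/
theorem no_consensus_of_lt {n d : ℕ} (hn : 3 ≤ n) (hd : 1 ≤ d)
    (r : Fin n → ℝ) (hrpos : ∀ i, 0 < r i)
    (hrmono : ∀ i j : Fin n, i ≤ j → r j ≤ r i)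
    {Ω : Type*} [MeasurableSpace Ω] (P : Measure Ω) [IsProbabilityMeasure P]
    (𝓔 : ℕ → Ω → Finset (Fin n × Fin n))
    (X0 : Ω → Fin n → EuclideanSpace ℝ (Fin d))
    (ρmin : ℝ) (hρmin : 0 < ρmin)
    (hdens : ∀ (z : Fin n → EuclideanSpace ℝ (Fin d)) (a : Fin n → ℝ),
      (∀ i, 0 < a i) →
      (∀ i, closedBall (z i) (a i) ⊆ closedBall (0 : EuclideanSpace ℝ (Fin d)) 1) →
      ENNReal.ofReal (ρmin *
          ∏ i : Fin n, (volume (closedBall (0 : EuclideanSpace ℝ (Fin d)) (a i))).toReal)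
        ≤ P {ω | ∀ i, X0 ω i ∈ closedBall (z i) (a i)})
    (hlt : r ⟨0, Nat.lt_of_lt_of_le (by norm_num) hn⟩ < 2)
    (hae : ∀ᵐ ω ∂P, ∃ τ : ℕ, ∀ t, τ ≤ t → ∀ i j : Fin n,
        traj r (fun s => 𝓔 s ω) (X0 ω) t i = traj r (fun s => 𝓔 s ω) (X0 ω) t j) :
    False := by
  set a0 : Fin n := ⟨0, by omega⟩ with ha0
  set r0 : ℝ := r a0 with hr0
  have hr0pos : 0 < r0 := hrpos a0
  set ε : ℝ := (2 - r0)/8 with hε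
  have hε0 : 0 < ε := by rw [hε]; linarith
  have hε1 : ε < 1/4 := by rw [hε]; linarith
  set u : EuclideanSpace ℝ (Fin d) := EuclideanSpace.single ⟨0, by omega⟩ (1:ℝ) with hu
  have hunorm : ‖u‖ = 1 := by rw [hu, EuclideanSpace.norm_single]; norm_num
  set z : Fin n → EuclideanSpace ℝ (Fin d) :=
    fun i => if i = a0 then (1-ε) • u else -((1-ε) • u) with hz
  have hznorm : ∀ i, ‖z i‖ = 1 - ε := by
    intro i
    rw [hz]
    by_cases h : i = a0 <;>
      simp [h, norm_smul, hunorm, abs_of_nonneg (by linarith : (0:ℝ) ≤ 1 - ε)]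
  have key : ‖(1-ε) • u - -((1-ε) • u)‖ = 2 - 2*ε := by
    have h1 : (1-ε) • u - -((1-ε) • u) = (2 - 2*ε) • u := by module
    rw [h1, norm_smul, hunorm, Real.norm_eq_abs, abs_of_nonneg (by linarith), mul_one]
  have hzdiff : ∀ i j : Fin n, (i = a0 ∧ j ≠ a0) ∨ (i ≠ a0 ∧ j = a0) →
      ‖z i - z j‖ = 2 - 2*ε := by
    rintro i j (⟨hi, hj⟩ | ⟨hi, hj⟩)
    · have hzi : z i = (1-ε) • u := by rw [hz]; simp [hi]
      have hzj : z j = -((1-ε) • u) := by rw [hz]; simp [hj]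
      rw [hzi, hzj, key]
    · have hzi : z i = -((1-ε) • u) := by rw [hz]; simp [hi]
      have hzj : z j = (1-ε) • u := by rw [hz]; simp [hj]
      rw [hzi, hzj, norm_sub_rev, key]
  -- the event G
  set G : Set Ω := {ω | ∀ i, X0 ω i ∈ closedBall (z i) ε} with hG
  have hsub : ∀ i, closedBall (z i) ε ⊆ closedBall (0 : EuclideanSpace ℝ (Fin d)) 1 := by
    intro i y hy
    rw [mem_closedBall_zero_iff]
    calc ‖y‖ = ‖(y - z i) + z i‖ := by rw [sub_add_cancel]
    _ ≤ ‖y - z i‖ + ‖z i‖ := norm_add_le _ _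
    _ ≤ ε + (1 - ε) := by
        gcongr
        · exact mem_closedBall_iff_norm.1 hy
        · rw [hznorm i]
    _ = 1 := by ring
  have hGpos : 0 < P G := by
    have hd := hdens z (fun _ => ε) (fun _ => hε0) hsub
    refine lt_of_lt_of_le ?_ hd
    rw [ENNReal.ofReal_pos]
    have hvol : ∀ i : Fin n,
        0 < (volume (closedBall (0 : EuclideanSpace ℝ (Fin d)) ε)).toReal := by
      intro i
      apply ENNReal.toReal_pos
      · refine ne_of_gt (lt_of_lt_of_le (measure_ball_pos volume (0 : EuclideanSpace ℝ (Fin d)) hε0) ?_)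
        exact measure_mono ball_subset_closedBall
      · exact measure_closedBall_lt_top.ne
    have := hvol ⟨0, by omega⟩
    have hprod : 0 < ∏ i : Fin n,
        (volume (closedBall (0 : EuclideanSpace ℝ (Fin d)) ε)).toReal :=
      Finset.prod_pos (fun i _ => hvol i)
    positivity
  -- on G, the two groups never meet
  have hinv : ∀ ω ∈ G, ∀ t i, traj r (fun s => 𝓔 s ω) (X0 ω) t i ∈ closedBall (z i) ε := by
    intro ω hω t
    induction t with
    | zero => exact hω
    | succ t ih =>
      intro i
      apply step_mem_closedBall_of (ih i)
      intro j hj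
      -- neighbors are in the same group
      have hzz : z j = z i := by
        by_contra hne
        have hij : (i = a0 ∧ j ≠ a0) ∨ (i ≠ a0 ∧ j = a0) := by
          rcases eq_or_ne i a0 with hi | hi
          · exact Or.inl ⟨hi, fun hjj => hne (by rw [hz]; simp [hi, hjj])⟩
          · refine Or.inr ⟨hi, ?_⟩
            by_contra hjj
            exact hne (by rw [hz]; simp [hi, hjj])
        have hcond := (mem_nbr.1 hj).2.2
        have hlow : 2 - 4*ε ≤ ‖traj r (fun s => 𝓔 s ω) (X0 ω) t i
            - traj r (fun s => 𝓔 s ω) (X0 ω) t j‖ := by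
          have hzij := hzdiff i j hij
          have h1 := mem_closedBall_iff_norm.1 (ih i)
          have h2 := mem_closedBall_iff_norm.1 (ih j)
          have htri : ‖z i - z j‖ ≤ ‖traj r (fun s => 𝓔 s ω) (X0 ω) t i - z i‖
              + ‖traj r (fun s => 𝓔 s ω) (X0 ω) t i
                - traj r (fun s => 𝓔 s ω) (X0 ω) t j‖
              + ‖traj r (fun s => 𝓔 s ω) (X0 ω) t j - z j‖ := by
            calc ‖z i - z j‖ ≤ ‖z i - traj r (fun s => 𝓔 s ω) (X0 ω) t i‖
                + ‖traj r (fun s => 𝓔 s ω) (X0 ω) t i - z j‖ :=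
                norm_sub_le_norm_sub_add_norm_sub _ _ _
            _ ≤ ‖z i - traj r (fun s => 𝓔 s ω) (X0 ω) t i‖
                + (‖traj r (fun s => 𝓔 s ω) (X0 ω) t i
                    - traj r (fun s => 𝓔 s ω) (X0 ω) t j‖
                  + ‖traj r (fun s => 𝓔 s ω) (X0 ω) t j - z j‖) := by
                gcongr
                exact norm_sub_le_norm_sub_add_norm_sub _ _ _
            _ = ‖traj r (fun s => 𝓔 s ω) (X0 ω) t i - z i‖
                + ‖traj r (fun s => 𝓔 s ω) (X0 ω) t i
                    - traj r (fun s => 𝓔 s ω) (X0 ω) t j‖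
                + ‖traj r (fun s => 𝓔 s ω) (X0 ω) t j - z j‖ := by
                rw [norm_sub_rev (z i)]
                ring
          rw [hzij] at htri
          linarith
        have hri : r i ≤ r0 := hrmono a0 i (by simp [ha0, Fin.le_def])
        have : 2 - 4*ε > r0 := by rw [hε]; linarith
        linarith
      rw [← hzz]
      exact ih j
  -- contradiction with almost sure consensus
  have hone : (⟨1, by omega⟩ : Fin n) ≠ a0 := by
    simp only [ha0, Fin.ne_iff_vne]
    omega
  have hnocons : ∀ ω ∈ G, ¬ (∃ τ : ℕ, ∀ t, τ ≤ t → ∀ i j : Fin n,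
      traj r (fun s => 𝓔 s ω) (X0 ω) t i = traj r (fun s => 𝓔 s ω) (X0 ω) t j) := by
    rintro ω hω ⟨τ, hτ⟩
    have heq := hτ τ le_rfl a0 ⟨1, by omega⟩
    have h1 := hinv ω hω τ a0
    have h2 := hinv ω hω τ ⟨1, by omega⟩
    rw [heq] at h1
    have hzz := hzdiff a0 ⟨1, by omega⟩ (Or.inl ⟨rfl, hone⟩)
    have := mem_closedBall_iff_norm.1 h1
    have := mem_closedBall_iff_norm.1 h2
    have htri : ‖z a0 - z ⟨1, by omega⟩‖
        ≤ ‖traj r (fun s => 𝓔 s ω) (X0 ω) τ ⟨1, by omega⟩ - z a0‖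
          + ‖traj r (fun s => 𝓔 s ω) (X0 ω) τ ⟨1, by omega⟩ - z ⟨1, by omega⟩‖ := by
      calc ‖z a0 - z ⟨1, by omega⟩‖
          ≤ ‖z a0 - traj r (fun s => 𝓔 s ω) (X0 ω) τ ⟨1, by omega⟩‖
            + ‖traj r (fun s => 𝓔 s ω) (X0 ω) τ ⟨1, by omega⟩ - z ⟨1, by omega⟩‖ :=
          norm_sub_le_norm_sub_add_norm_sub _ _ _
      _ = ‖traj r (fun s => 𝓔 s ω) (X0 ω) τ ⟨1, by omega⟩ - z a0‖
            + ‖traj r (fun s => 𝓔 s ω) (X0 ω) τ ⟨1, by omega⟩ - z ⟨1, by omega⟩‖ := by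
          rw [norm_sub_rev (z a0)]
    rw [hzz] at htri
    linarith
  have hzero : P G = 0 := by
    have h0 : P {ω | ¬ (∃ τ : ℕ, ∀ t, τ ≤ t → ∀ i j : Fin n,
        traj r (fun s => 𝓔 s ω) (X0 ω) t i = traj r (fun s => 𝓔 s ω) (X0 ω) t j)} = 0 := by
      rw [← MeasureTheory.ae_iff]
      exact hae
    refine le_antisymm ?_ zero_le
    rw [← h0]
    exact measure_mono hnocons
  rw [hzero] at hGpos
  exact lt_irrefl _ hGpos

/-- The hard direction: with the largest radius at least 2, consensus occurs a.s. -/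
theorem as_consensus_of_two_le {n d : ℕ} (hn : 3 ≤ n)
    (r : Fin n → ℝ) (hrpos : ∀ i, 0 < r i)
    (hrmono : ∀ i j : Fin n, i ≤ j → r j ≤ r i)
    {Ω : Type*} [MeasurableSpace Ω] (P : Measure Ω) [IsProbabilityMeasure P]
    (𝓔 : ℕ → Ω → Finset (Fin n × Fin n)) (h𝓔meas : ∀ t, Measurable (𝓔 t))
    (h𝓔indep : iIndepFun 𝓔 P)
    (δ : ℝ) (hδ : 0 < δ)
    (h𝓔low : ∀ (t : ℕ) (F : Finset (Fin n × Fin n)),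
      F ⊆ (Finset.univ : Finset (Fin n)).offDiag →
      ENNReal.ofReal δ ≤ P {ω | 𝓔 t ω = F})
    (X0 : Ω → Fin n → EuclideanSpace ℝ (Fin d))
    (hX0ball : ∀ ω i, ‖X0 ω i‖ ≤ 1)
    (h2 : 2 ≤ r ⟨0, Nat.lt_of_lt_of_le (by norm_num) hn⟩) :
    ∀ᵐ ω ∂P, ∃ τ : ℕ, ∀ t, τ ≤ t → ∀ i j : Fin n,
        traj r (fun s => 𝓔 s ω) (X0 ω) t i = traj r (fun s => 𝓔 s ω) (X0 ω) t j := by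
  obtain ⟨L, hLne, hLsub, hLcons⟩ := consensus_list (d := d) hn hrpos hrmono h2
  set T := L.length with hT
  have hT0 : 0 < T := List.length_pos_iff.2 hLne
  set F : ℕ → Finset (Fin n × Fin n) := fun t => L.getD (t % T) ∅ with hF
  have hFsub : ∀ t, F t ⊆ Finset.univ.offDiag := by
    intro t
    have hlt : t % T < T := Nat.mod_lt _ hT0
    rw [hF]
    simp only
    rw [List.getD_eq_getElem L ∅ hlt]
    exact hLsub _ (List.getElem_mem hlt)
  set B : ℕ → Set Ω := fun t => {ω | 𝓔 t ω = F t} with hB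
  have hBpre : ∀ t, B t = 𝓔 t ⁻¹' {F t} := by
    intro t; ext ω; simp [hB]
  have hBmeas : ∀ t, MeasurableSet (B t) := by
    intro t
    rw [hBpre]
    exact h𝓔meas t (MeasurableSpace.measurableSet_top)
  have hBcomap : ∀ t, MeasurableSet[MeasurableSpace.comap (𝓔 t) inferInstance] (B t) := by
    intro t
    rw [hBpre]
    exact ⟨{F t}, MeasurableSpace.measurableSet_top, rfl⟩
  set A : ℕ → Set Ω := fun k => ⋂ t ∈ Finset.Ico (k*T) (k*T+T), B t with hA
  have hAmeas : ∀ k, MeasurableSet (A k) :=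
    fun k => Finset.measurableSet_biInter _ (fun t _ => hBmeas t)
  have hAprod : ∀ k, P (A k) = ∏ t ∈ Finset.Ico (k*T) (k*T+T), P (B t) :=
    fun k => h𝓔indep.meas_biInter (fun t _ => hBcomap t)
  have hBlow : ∀ t, ENNReal.ofReal δ ≤ P (B t) := fun t => h𝓔low t (F t) (hFsub t)
  have hAlow : ∀ k, (ENNReal.ofReal δ)^T ≤ P (A k) := by
    intro k
    rw [hAprod k]
    calc (ENNReal.ofReal δ)^T
        = ∏ _t ∈ Finset.Ico (k*T) (k*T+T), ENNReal.ofReal δ := by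
          rw [Finset.prod_const, Nat.card_Ico]
          congr 1
          omega
    _ ≤ ∏ t ∈ Finset.Ico (k*T) (k*T+T), P (B t) :=
          Finset.prod_le_prod' (fun t _ => hBlow t)
  have hdisj : ∀ (S : Finset ℕ), (↑S : Set ℕ).PairwiseDisjoint
      (fun k => Finset.Ico (k*T) (k*T+T)) := by
    intro S k _ k' _ hkk'
    apply Finset.disjoint_left.2
    intro t ht ht'
    rw [Finset.mem_Ico] at ht ht'
    rcases Nat.lt_or_ge k k' with h | h
    · have hle : k*T + T ≤ k'*T := by
        have := Nat.mul_le_mul_right T (Nat.succ_le_of_lt h)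
        simpa [Nat.succ_mul] using this
      omega
    · rcases Nat.lt_or_ge k' k with h' | h'
      · have hle : k'*T + T ≤ k*T := by
          have := Nat.mul_le_mul_right T (Nat.succ_le_of_lt h')
          simpa [Nat.succ_mul] using this
        omega
      · exact hkk' (Nat.le_antisymm h' h)
  have hAindep : iIndepSet A P := by
    rw [iIndepSet_iff_meas_biInter hAmeas]
    intro S
    have h1 : (⋂ k ∈ S, A k)
        = ⋂ t ∈ S.biUnion (fun k => Finset.Ico (k*T) (k*T+T)), B t := by
      rw [Finset.set_biInter_biUnion]
    rw [h1, h𝓔indep.meas_biInter (fun t _ => hBcomap t), Finset.prod_biUnion (hdisj S)]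
    exact Finset.prod_congr rfl (fun k _ => (hAprod k).symm)
  have htsum : ∑' k, P (A k) = ⊤ := by
    have hne : (ENNReal.ofReal δ)^T ≠ 0 := by
      apply pow_ne_zero
      simp only [ne_eq, ENNReal.ofReal_eq_zero, not_le]
      exact hδ
    have hle := ENNReal.tsum_le_tsum (fun k => hAlow k)
    rw [ENNReal.tsum_const_eq_top_of_ne_zero hne] at hle
    exact top_le_iff.1 hle
  have hone := measure_limsup_eq_one hAmeas hAindep htsum
  have haemem : ∀ᵐ ω ∂P, ω ∈ Filter.limsup A Filter.atTop := by
    rw [MeasureTheory.ae_iff]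
    have hms : MeasurableSet (Filter.limsup A Filter.atTop) := MeasurableSet.measurableSet_limsup hAmeas
    have hcompl : {ω | ¬ ω ∈ Filter.limsup A Filter.atTop}
        = (Filter.limsup A Filter.atTop)ᶜ := rfl
    rw [hcompl, measure_compl hms (measure_ne_top _ _), hone, measure_univ, tsub_self]
  filter_upwards [haemem] with ω hω
  obtain ⟨k, hk⟩ := (Filter.mem_limsup_iff_frequently_mem.1 hω).exists
  refine ⟨k*T + T, ?_⟩
  apply traj_consensus_persist
  rw [traj_add (k*T) T]
  set y := traj r (fun s => 𝓔 s ω) (X0 ω) (k*T) with hy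
  have hyball : ∀ i, ‖y i‖ ≤ 1 := by
    intro i
    exact mem_closedBall_zero_iff.1
      (traj_ball (fun i => mem_closedBall_zero_iff.2 (hX0ball ω i)) _ i)
  have hmatch : ∀ s (hs : s < L.length), 𝓔 (k*T + s) ω = L.get ⟨s, hs⟩ := by
    intro s hs
    have hsT : s < T := hs
    have hsIco : k*T + s ∈ Finset.Ico (k*T) (k*T+T) := by
      rw [Finset.mem_Ico]
      omega
    have hBmem : ω ∈ B (k*T + s) := Set.mem_iInter₂.1 hk (k*T+s) hsIco
    have hmod : (k*T + s) % T = s := by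
      rw [Nat.mul_comm, Nat.mul_add_mod]
      exact Nat.mod_eq_of_lt hsT
    have : 𝓔 (k*T+s) ω = F (k*T+s) := hBmem
    rw [this, hF]
    simp only
    rw [hmod, List.getD_eq_getElem L ∅ hs]
    simp [List.get_eq_getElem]
  have hexec : traj r (fun s => 𝓔 (k*T + s) ω) y T = exec r L y := by
    rw [hT]
    exact traj_eq_exec hmatch
  rw [hexec]
  exact hLcons y hyball

end RIBC

/-- With a random initial state whose joint distribution has a positive
density lower bound on the product of unit balls (and initial state independent of the
random interactions), the RIBC system reaches consensus in finite time almost surely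
if and only if the largest confidence bound is at least 2. -/
theorem ribc_consensus_random_initial_iff
    {n d : ℕ} (hn : 3 ≤ n) (hd : 1 ≤ d)
    (r : Fin n → ℝ) (hrpos : ∀ i, 0 < r i)
    (hrmono : ∀ i j : Fin n, i ≤ j → r j ≤ r i)
    {Ω : Type*} [MeasurableSpace Ω] (P : Measure Ω) [IsProbabilityMeasure P]
    (𝓔 : ℕ → Ω → Finset (Fin n × Fin n)) (h𝓔meas : ∀ t, Measurable (𝓔 t))
    (h𝓔sub : ∀ t ω, 𝓔 t ω ⊆ (Finset.univ : Finset (Fin n)).offDiag)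
    (h𝓔indep : iIndepFun 𝓔 P)
    (δ : ℝ) (hδ : δ ∈ Set.Ioo (0 : ℝ) 1)
    (h𝓔low : ∀ (t : ℕ) (F : Finset (Fin n × Fin n)),
      F ⊆ (Finset.univ : Finset (Fin n)).offDiag →
      ENNReal.ofReal δ ≤ P {ω | 𝓔 t ω = F})
    -- the random initial state, taking values in the product of unit balls
    (X0 : Ω → Fin n → EuclideanSpace ℝ (Fin d)) (hX0meas : Measurable X0)
    (hX0ball : ∀ ω i, ‖X0 ω i‖ ≤ 1)
    -- the initial state is independent of the random interactions
    (hX0indep : IndepFun (fun ω => fun t => 𝓔 t ω) X0 P)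
    -- density lower bound for the joint distribution of the initial state
    (ρmin : ℝ) (hρmin : 0 < ρmin)
    (hdens : ∀ (z : Fin n → EuclideanSpace ℝ (Fin d)) (a : Fin n → ℝ),
      (∀ i, 0 < a i) →
      (∀ i, closedBall (z i) (a i) ⊆ closedBall (0 : EuclideanSpace ℝ (Fin d)) 1) →
      ENNReal.ofReal (ρmin *
          ∏ i : Fin n, (volume (closedBall (0 : EuclideanSpace ℝ (Fin d)) (a i))).toReal)
        ≤ P {ω | ∀ i, X0 ω i ∈ closedBall (z i) (a i)}) :
    (∀ᵐ ω ∂P, ∃ τ : ℕ, ∀ t, τ ≤ t → ∀ i j : Fin n,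
        traj r (fun s => 𝓔 s ω) (X0 ω) t i = traj r (fun s => 𝓔 s ω) (X0 ω) t j)
      ↔ 2 ≤ r ⟨0, by omega⟩ := by
  constructor
  · intro hae
    by_contra hlt
    push_neg at hlt
    exact absurd hae (fun hae => RIBC.no_consensus_of_lt hn hd r hrpos hrmono P 𝓔 X0
      ρmin hρmin hdens hlt hae |>.elim)
  · intro h2
    exact RIBC.as_consensus_of_two_le hn r hrpos hrmono P 𝓔 h𝓔meas h𝓔indep δ hδ.1 h𝓔low
      X0 hX0ball h2
end
end

section
/- Let S be a set of states contained in the product of n closed unit balls of ℝ^d. Assume there exists a time horizon t* > 0 such that for every initial state x(0) in the product of unit balls, one can choose deterministic edge sets E'_0, E'_1, …, E'_{t*−1} ⊆ A so that the controlled bounded-confidence dynamics reaches S at some time in the interval [0, t*]. Then, under the RIBC system with random edge sets that are independent across times and satisfy P(E_t = 𝓔) ≥ δ for every 𝓔 ⊆ A and t (δ ∈ (0,1)), for every initial state x(0) in the product of unit balls the first hitting time τ := min{t' : x(t') ∈ S} satisfies P(τ ≥ t) ≤ (1 − δ^{t*})^{⌊t/(t*+1)⌋} for all t ≥ 1. 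-/
open Finset MeasureTheory ProbabilityTheory Metric

noncomputable section

open scoped Classical

lemma traj_congr {n d : ℕ} (r : Fin n → ℝ) (E E' : ℕ → Finset (Fin n × Fin n))
    (x0 : Fin n → EuclideanSpace ℝ (Fin d)) (t : ℕ) (h : ∀ u, u < t → E u = E' u) :
    traj r E x0 t = traj r E' x0 t := by
  induction t with
  | zero => rfl
  | succ t ih =>
    show step r (E t) (traj r E x0 t) = step r (E' t) (traj r E' x0 t)
    rw [ih (fun u hu => h u (hu.trans (Nat.lt_succ_self t))), h t (Nat.lt_succ_self t)]

lemma traj_add {n d : ℕ} (r : Fin n → ℝ) (E : ℕ → Finset (Fin n × Fin n))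
    (x0 : Fin n → EuclideanSpace ℝ (Fin d)) (a s : ℕ) :
    traj r E x0 (a + s) = traj r (fun u => E (a + u)) (traj r E x0 a) s := by
  induction s with
  | zero => rfl
  | succ s ih =>
    show step r (E (a + s)) (traj r E x0 (a + s)) = _
    rw [ih]; rfl

lemma step_norm_le {n d : ℕ} (r : Fin n → ℝ) (E : Finset (Fin n × Fin n))
    (x : Fin n → EuclideanSpace ℝ (Fin d)) (hx : ∀ i, ‖x i‖ ≤ 1) (i : Fin n) :
    ‖step r E x i‖ ≤ 1 := by
  have hc : (0:ℝ) < 1 + (nbr r E x i).card := by positivity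
  have h1 : ‖x i + ∑ j ∈ nbr r E x i, x j‖ ≤ 1 + (nbr r E x i).card := by
    calc ‖x i + ∑ j ∈ nbr r E x i, x j‖
        ≤ ‖x i‖ + ∑ j ∈ nbr r E x i, ‖x j‖ :=
          (norm_add_le _ _).trans (by gcongr; exact norm_sum_le _ _)
      _ ≤ 1 + ∑ _j ∈ nbr r E x i, (1:ℝ) := by
          gcongr with j hj
          exacts [hx i, hx j]
      _ = 1 + (nbr r E x i).card := by simp
  rw [step, norm_smul, norm_inv, Real.norm_eq_abs, abs_of_pos hc]
  calc (1 + ((nbr r E x i).card:ℝ))⁻¹ * ‖x i + ∑ j ∈ nbr r E x i, x j‖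
      ≤ (1 + ((nbr r E x i).card:ℝ))⁻¹ * (1 + (nbr r E x i).card) :=
        mul_le_mul_of_nonneg_left h1 (inv_nonneg.mpr hc.le)
    _ = 1 := inv_mul_cancel₀ hc.ne'

lemma traj_norm_le {n d : ℕ} (r : Fin n → ℝ) (E : ℕ → Finset (Fin n × Fin n))
    (x0 : Fin n → EuclideanSpace ℝ (Fin d)) (hx0 : ∀ i, ‖x0 i‖ ≤ 1) (t : ℕ) :
    ∀ i, ‖traj r E x0 t i‖ ≤ 1 := by
  induction t with
  | zero => exact hx0
  | succ t ih => exact step_norm_le r (E t) _ ih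


/-- Connection between the RIBC and CIBC systems: if from every initial
state in the product of unit balls some set `S` can be reached within `t*` steps by a
suitable choice of control edge sets, then under random interactions the first hitting
time `τ` of `S` satisfies `P(τ ≥ t) ≤ (1 - δ^{t*})^{⌊t/(t*+1)⌋}`. -/
theorem ribc_cibc_hitting_time
    {n d : ℕ} (hn : 3 ≤ n) (hd : 1 ≤ d)
    (r : Fin n → ℝ) (hrpos : ∀ i, 0 < r i)
    (hrmono : ∀ i j : Fin n, i ≤ j → r j ≤ r i)
    (S : Set (Fin n → EuclideanSpace ℝ (Fin d)))
    (hS : ∀ y ∈ S, ∀ i, ‖y i‖ ≤ 1)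
    (tstar : ℕ) (htstar : 0 < tstar)
    (hctrl : ∀ y0 : Fin n → EuclideanSpace ℝ (Fin d), (∀ i, ‖y0 i‖ ≤ 1) →
      ∃ E' : ℕ → Finset (Fin n × Fin n),
        (∀ s, s < tstar → E' s ⊆ (Finset.univ : Finset (Fin n)).offDiag) ∧
        ∃ t ≤ tstar, traj r E' y0 t ∈ S)
    {Ω : Type*} [MeasurableSpace Ω] (P : Measure Ω) [IsProbabilityMeasure P]
    (𝓔 : ℕ → Ω → Finset (Fin n × Fin n)) (h𝓔meas : ∀ t, Measurable (𝓔 t))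
    (h𝓔sub : ∀ t ω, 𝓔 t ω ⊆ (Finset.univ : Finset (Fin n)).offDiag)
    (h𝓔indep : iIndepFun 𝓔 P)
    (δ : ℝ) (hδ : δ ∈ Set.Ioo (0 : ℝ) 1)
    (h𝓔low : ∀ (t : ℕ) (F : Finset (Fin n × Fin n)),
      F ⊆ (Finset.univ : Finset (Fin n)).offDiag →
      ENNReal.ofReal δ ≤ P {ω | 𝓔 t ω = F})
    (x0 : Fin n → EuclideanSpace ℝ (Fin d)) (hx0 : ∀ i, ‖x0 i‖ ≤ 1) :
    -- `{ω | ∀ s < t, x(s) ∉ S}` is exactly the event `{τ ≥ t}` for the first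
    -- hitting time `τ := min {t' : x(t') ∈ S}`
    ∀ t : ℕ, 1 ≤ t →
      P {ω | ∀ s, s < t → traj r (fun u => 𝓔 u ω) x0 s ∉ S} ≤
        ENNReal.ofReal ((1 - δ ^ tstar) ^ (t / (tstar + 1))) := by
  obtain ⟨hδ0, hδ1⟩ := hδ
  have hδt1 : δ ^ tstar ≤ 1 := pow_le_one₀ hδ0.le hδ1.le
  have hδt0 : (0:ℝ) ≤ δ ^ tstar := (pow_pos hδ0 _).le
  intro t ht
  set T := tstar + 1 with hT
  set c : ENNReal := ENNReal.ofReal (1 - δ ^ tstar) with hcdef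
  set A : ℕ → Set Ω := fun t => {ω | ∀ s, s < t → traj r (fun u => 𝓔 u ω) x0 s ∉ S}
    with hA
  show P (A t) ≤ ENNReal.ofReal ((1 - δ ^ tstar) ^ (t / T))
  have hmono : ∀ {a b : ℕ}, a ≤ b → A b ⊆ A a :=
    fun {a b} h ω hω s hs => hω s (lt_of_lt_of_le hs h)
  have hbdd : ∀ (E : ℕ → Finset (Fin n × Fin n)) (s : ℕ) (i : Fin n),
      ‖traj r E x0 s i‖ ≤ 1 := fun E s => traj_norm_le r E x0 hx0 s
  -- key block estimate
  have key : ∀ k : ℕ, P (A ((k + 1) * T)) ≤ c * P (A (k * T)) := by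
    intro k
    set m := k * T with hm
    let ext : (Fin m → Finset (Fin n × Fin n)) → ℕ → Finset (Fin n × Fin n) :=
      fun e u => if h : u < m then e ⟨u, h⟩ else ∅
    choose E' hE'sub tt htt httS using
      fun e : Fin m → Finset (Fin n × Fin n) => hctrl (traj r (ext e) x0 m) (hbdd _ m)
    let g : (Fin m → Finset (Fin n × Fin n)) → ℕ → Finset (Fin n × Fin n) :=
      fun e i => if i < m then ext e i else E' e (i - m)
    let Atom : (Fin m → Finset (Fin n × Fin n)) → Set Ω :=
      fun e => ⋂ i ∈ Finset.range m, 𝓔 i ⁻¹' {g e i}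
    let B : (Fin m → Finset (Fin n × Fin n)) → Set Ω :=
      fun e => ⋂ i ∈ Finset.Ico m (m + tstar), 𝓔 i ⁻¹' {g e i}
    have hgext : ∀ (e) (u : ℕ), u < m → g e u = ext e u := by
      intro e u hu; simp only [g, if_pos hu]
    have hAtomMem : ∀ (e) (ω), ω ∈ Atom e ↔ ∀ u, u < m → 𝓔 u ω = ext e u := by
      intro e ω
      simp only [Atom, Set.mem_iInter, Finset.mem_range, Set.mem_preimage,
        Set.mem_singleton_iff]
      constructor
      · intro h u hu; rw [h u hu, hgext e u hu]
      · intro h u hu; rw [h u hu, hgext e u hu]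
    have hBMem : ∀ (e) (ω), ω ∈ B e → ∀ s, s < tstar → 𝓔 (m + s) ω = E' e s := by
      intro e ω hω s hs
      have hmem : m + s ∈ Finset.Ico m (m + tstar) := by
        simp [Finset.mem_Ico]; omega
      have := Set.mem_iInter₂.1 hω _ hmem
      simp only [Set.mem_preimage, Set.mem_singleton_iff] at this
      rw [this]
      simp only [g]
      rw [if_neg (by omega), Nat.add_sub_cancel_left]
    have htrajAtom : ∀ (e) (ω), ω ∈ Atom e → ∀ s, s ≤ m →
        traj r (fun u => 𝓔 u ω) x0 s = traj r (ext e) x0 s := by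
      intro e ω hω s hs
      exact traj_congr r _ _ x0 s (fun u hu => (hAtomMem e ω).1 hω u (lt_of_lt_of_le hu hs))
    have hcover : ∀ ω : Ω, ω ∈ Atom (fun u => 𝓔 u ω) := by
      intro ω
      refine (hAtomMem _ ω).2 (fun u hu => ?_)
      simp only [ext, dif_pos hu]
    have hmeasS : ∀ (i : ℕ) (F : Finset (Fin n × Fin n)), MeasurableSet (𝓔 i ⁻¹' {F}) :=
      fun i F => (h𝓔meas i) trivial
    have hAtommeas : ∀ e, MeasurableSet (Atom e) := by
      intro e
      exact Finset.measurableSet_biInter _ (fun i _ => hmeasS i _)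
    have hBmeas : ∀ e, MeasurableSet (B e) := by
      intro e
      exact Finset.measurableSet_biInter _ (fun i _ => hmeasS i _)
    -- independence products
    have hPAtom : ∀ e, P (Atom e) = ∏ i ∈ Finset.range m, P (𝓔 i ⁻¹' {g e i}) := by
      intro e
      exact h𝓔indep.measure_inter_preimage_eq_mul (Finset.range m)
        (sets := fun i => {g e i}) (fun i _ => trivial)
    have hABeq : ∀ e, Atom e ∩ B e = ⋂ i ∈ Finset.range (m + tstar), 𝓔 i ⁻¹' {g e i} := by
      intro e
      rw [Finset.range_eq_Ico, ← Finset.Ico_union_Ico_eq_Ico (Nat.zero_le m) (Nat.le_add_right m tstar),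
        ← Finset.set_biInter_coe, Finset.coe_union, Set.biInter_union,
        Finset.set_biInter_coe, Finset.set_biInter_coe, ← Finset.range_eq_Ico]
    have hPAB : ∀ e, P (Atom e ∩ B e) =
        (∏ i ∈ Finset.range m, P (𝓔 i ⁻¹' {g e i})) *
        ∏ i ∈ Finset.range tstar, P (𝓔 (m + i) ⁻¹' {g e (m + i)}) := by
      intro e
      rw [hABeq e, h𝓔indep.measure_inter_preimage_eq_mul (Finset.range (m + tstar))
        (sets := fun i => {g e i}) (fun i _ => trivial), Finset.prod_range_add]
    have hPBlow : ∀ e, ENNReal.ofReal (δ ^ tstar) ≤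
        ∏ i ∈ Finset.range tstar, P (𝓔 (m + i) ⁻¹' {g e (m + i)}) := by
      intro e
      have : ∀ i ∈ Finset.range tstar, ENNReal.ofReal δ ≤ P (𝓔 (m + i) ⁻¹' {g e (m + i)}) := by
        intro i hi
        rw [Finset.mem_range] at hi
        have hg : g e (m + i) = E' e i := by
          simp only [g]; rw [if_neg (by omega), Nat.add_sub_cancel_left]
        rw [hg]
        exact h𝓔low (m + i) (E' e i) (hE'sub e i hi)
      calc ENNReal.ofReal (δ ^ tstar) = (ENNReal.ofReal δ) ^ tstar :=
            ENNReal.ofReal_pow hδ0.le tstar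
        _ = ∏ _i ∈ Finset.range tstar, ENNReal.ofReal δ := by
            rw [Finset.prod_const, Finset.card_range]
        _ ≤ _ := Finset.prod_le_prod' this
    have hABlow : ∀ e, P (Atom e) * ENNReal.ofReal (δ ^ tstar) ≤ P (Atom e ∩ B e) := by
      intro e
      rw [hPAB e, ← hPAtom e]
      exact mul_le_mul_right (hPBlow e) _
    -- the good atoms
    set G : Finset (Fin m → Finset (Fin n × Fin n)) :=
      Finset.univ.filter (fun e => ∀ s, s < m → traj r (ext e) x0 s ∉ S) with hG
    -- e not in G: empty intersection
    have hnotG : ∀ e ∉ G, A ((k + 1) * T) ∩ Atom e = ∅ := by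
      intro e he
      rw [hG, Finset.mem_filter] at he
      push_neg at he
      obtain ⟨s, hs, hsS⟩ := he (Finset.mem_univ e)
      ext ω
      simp only [Set.mem_inter_iff, Set.mem_empty_iff_false, iff_false, not_and]
      intro hωA hωAtom
      have : traj r (fun u => 𝓔 u ω) x0 s ∈ S := by
        rw [htrajAtom e ω hωAtom s hs.le]; exact hsS
      exact hωA s (lt_of_lt_of_le hs (by rw [hm]; exact Nat.mul_le_mul_right T (Nat.le_succ k))) this
    -- e in G: avoid B e
    have hinG : ∀ e ∈ G, A ((k + 1) * T) ∩ Atom e ⊆ Atom e \ (Atom e ∩ B e) := by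
      intro e _ ω hω
      obtain ⟨hωA, hωAtom⟩ := hω
      refine ⟨hωAtom, fun hωB => ?_⟩
      have hωB' : ω ∈ B e := hωB.2
      have hhit : traj r (fun u => 𝓔 u ω) x0 (m + tt e) ∈ S := by
        rw [traj_add, htrajAtom e ω hωAtom m le_rfl]
        have : traj r (fun u => 𝓔 (m + u) ω) (traj r (ext e) x0 m) (tt e)
            = traj r (E' e) (traj r (ext e) x0 m) (tt e) := by
          apply traj_congr
          intro u hu
          exact hBMem e ω hωB' u (lt_of_lt_of_le hu (htt e))
        rw [this]
        exact httS e
      exact hωA (m + tt e) (by rw [hm]; have := htt e; rw [hT]; ring_nf; omega) hhit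
    -- summing up
    calc P (A ((k + 1) * T))
        ≤ ∑ e ∈ (Finset.univ : Finset (Fin m → Finset (Fin n × Fin n))),
            P (A ((k + 1) * T) ∩ Atom e) := by
          refine le_trans (measure_mono ?_) (measure_biUnion_finset_le _ _)
          intro ω hω
          exact Set.mem_biUnion (Finset.mem_univ _) ⟨hω, hcover ω⟩
      _ = ∑ e ∈ G, P (A ((k + 1) * T) ∩ Atom e) := by
          refine (Finset.sum_subset (Finset.subset_univ G) ?_).symm
          intro e _ he
          rw [hnotG e he, measure_empty]
      _ ≤ ∑ e ∈ G, c * P (Atom e) := by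
          refine Finset.sum_le_sum (fun e he => ?_)
          calc P (A ((k + 1) * T) ∩ Atom e)
              ≤ P (Atom e \ (Atom e ∩ B e)) := measure_mono (hinG e he)
            _ = P (Atom e) - P (Atom e ∩ B e) := by
                refine measure_diff Set.inter_subset_left
                  ((hAtommeas e).inter (hBmeas e)).nullMeasurableSet (measure_ne_top P _)
            _ ≤ c * P (Atom e) := by
                rw [tsub_le_iff_right]
                calc P (Atom e)
                    = 1 * P (Atom e) := (one_mul _).symm
                  _ = (c + ENNReal.ofReal (δ ^ tstar)) * P (Atom e) := by
                      congr 1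
                      rw [hcdef, ← ENNReal.ofReal_add (by linarith) hδt0]
                      norm_num
                  _ = c * P (Atom e) + ENNReal.ofReal (δ ^ tstar) * P (Atom e) := by
                      ring
                  _ ≤ c * P (Atom e) + P (Atom e ∩ B e) := by
                      gcongr
                      rw [mul_comm]; exact hABlow e
      _ = c * ∑ e ∈ G, P (Atom e) := by rw [Finset.mul_sum]
      _ = c * P (⋃ e ∈ G, Atom e) := by
          congr 1
          refine (measure_biUnion_finset ?_ (fun e _ => hAtommeas e)).symm
          intro e he e' he' hne
          rw [Function.onFun, Set.disjoint_left]
          intro ω hω hω'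
          apply hne
          funext u
          have h1 := (hAtomMem e ω).1 hω u u.isLt
          have h2 := (hAtomMem e' ω).1 hω' u u.isLt
          have : ext e u = ext e' u := by rw [← h1, h2]
          simpa only [ext, dif_pos u.isLt] using this
      _ ≤ c * P (A m) := by
          gcongr
          intro ω hω
          obtain ⟨e, he⟩ := Set.mem_iUnion.1 hω
          obtain ⟨heG, hωe⟩ := Set.mem_iUnion.1 he
          rw [hG, Finset.mem_filter] at heG
          intro s hs hsS
          exact heG.2 s hs (by rw [← htrajAtom e ω hωe s hs.le]; exact hsS)
  -- iterate
  have hiter : ∀ k : ℕ, P (A (k * T)) ≤ c ^ k := by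
    intro k
    induction k with
    | zero => simpa using prob_le_one
    | succ k ih =>
      calc P (A ((k + 1) * T)) ≤ c * P (A (k * T)) := key k
        _ ≤ c * c ^ k := mul_le_mul_right ih c
        _ = c ^ (k + 1) := (pow_succ' c k).symm
  calc P (A t) ≤ P (A ((t / T) * T)) := measure_mono (hmono (Nat.div_mul_le_self t T))
    _ ≤ c ^ (t / T) := hiter _
    _ = ENNReal.ofReal ((1 - δ ^ tstar) ^ (t / T)) := by
        rw [hcdef, ← ENNReal.ofReal_pow (by linarith)]
end
end
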